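/- Let β ∈ [1/2, 2] and define P : ℝ² \ {0} → ℝ by P(x) := v_β(θ(x)) / |x|³, where θ(x) is a polar angle of x. Then P is twice continuously differentiable on ℝ² \ {0} and satisfies ∂²P/∂x₁²(x) + ∂²P/∂x₂²(x) = (β x₁² + x₂²)^{-5/2} for every x = (x₁, x₂) ∈ ℝ² \ {0}. -/

import Mathlib

open Real MeasureTheory Filter Topology Set
open scoped ENNReal RealInnerProductSpace

noncomputable section

/-- The forcing term `f_β(θ) = (β cos²θ + sin²θ)^(-5/2)`. -/
def fker (β θ : ℝ) : ℝ := (β * Real.cos θ ^ 2 + Real.sin θ ^ 2) ^ (-(5:ℝ)/2)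

/-- `v` is a π-periodic, twice continuously differentiable solution of `v'' + 9 v = f_β`. -/
def IsVBeta (β : ℝ) (v : ℝ → ℝ) : Prop :=
  ContDiff ℝ 2 v ∧ Function.Periodic v π ∧
    ∀ θ : ℝ, deriv (deriv v) θ + 9 * v θ = fker β θ


/-- `P(x) = v(θ(x)) / |x|³` in Cartesian coordinates on `ℝ²`, where `θ(x)` is a polar
angle of `x` (chosen as `Complex.arg`; since `v` is π-periodic the choice is immaterial). -/
def Pfun (v : ℝ → ℝ) (x : ℝ × ℝ) : ℝ :=
  v (Complex.arg ((x.1 : ℂ) + (x.2 : ℂ) * Complex.I)) / (x.1^2 + x.2^2) ^ ((3:ℝ)/2)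

/-!
Since `v` is π-periodic, `v (arg z) = v (arg (ε z))` for `ε = ±1`, and for `z ≠ 0` one sign puts
`ε z` in the slit plane, where `arg` is smooth: the branch cut of `arg` can be moved away from any
given point. Along horizontal and vertical lines `arg` then has derivative `c / (t² + e²)`, and
differentiating `g (A t) / (t² + e²)^{3/2}` twice under that hypothesis gives an explicit
combination of `g''`, `g'` and `g`. Adding the two directions, the `v'` terms cancel and
`ΔP = (v'' + 9 v)(θ) / |x|⁵ = f_β(θ) / |x|⁵ = (β x₁² + x₂²)^{-5/2}`.
-/

open Complex (arg I slitPlane)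

theorem HasDerivAt.carg_real {f : ℝ → ℂ} {f' : ℂ} {x : ℝ} (hf : HasDerivAt f f' x)
    (hx : f x ∈ slitPlane) : HasDerivAt (fun t => arg (f t)) (f' / f x).im x := by
  simpa only [Function.comp_def, Complex.imCLM_apply, Complex.log_im] using
    Complex.imCLM.hasFDerivAt.comp_hasDerivAt x (hf.clog_real hx)

theorem Complex.contDiffAt_arg {z : ℂ} (hz : z ∈ slitPlane) {n : WithTop ℕ∞} :
    ContDiffAt ℝ n arg z := by
  have harg : arg = fun w => (Complex.log w).im := funext fun w => (Complex.log_im w).symm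
  rw [harg]
  exact imCLM.contDiff.contDiffAt.comp z ((contDiffAt_log hz).restrict_scalars ℝ)

@[fun_prop]
theorem Complex.contDiff_ofReal {n : WithTop ℕ∞} : ContDiff ℝ n ((↑) : ℝ → ℂ) :=
  ofRealCLM.contDiff

theorem Complex.exists_sq_eq_one_mul_mem_slitPlane {z : ℂ} (hz : z ≠ 0) :
    ∃ ε : ℝ, ε ^ 2 = 1 ∧ (ε : ℂ) * z ∈ slitPlane := by
  rcases mem_slitPlane_or_neg_mem_slitPlane hz with h | h
  · exact ⟨1, by norm_num, by simpa using h⟩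
  · exact ⟨-1, by norm_num, by simpa using h⟩

theorem Complex.ofReal_add_mul_I_ne_zero {x : ℝ × ℝ} (hx : x ≠ 0) :
    (x.1 : ℂ) + x.2 * I ≠ 0 := by
  contrapose! hx
  have hre := congrArg Complex.re hx
  have him := congrArg Complex.im hx
  simp only [Complex.add_re, Complex.add_im, Complex.ofReal_re, Complex.ofReal_im,
    Complex.mul_re, Complex.mul_im, Complex.I_re, Complex.I_im] at hre him
  ext <;> simp_all

theorem Complex.sq_add_sq_pos {a b : ℝ} (h : (a : ℂ) + b * I ≠ 0) : 0 < a ^ 2 + b ^ 2 := by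
  rw [← normSq_add_mul_I]
  exact normSq_pos.2 h

namespace Function.Periodic

variable {v : ℝ → ℝ}

theorem comp_arg_neg (hv : Periodic v π) (z : ℂ) : v (arg (-z)) = v (arg z) := by
  rcases eq_or_ne z 0 with rfl | hz
  · simp
  obtain ⟨k, hk⟩ := Real.Angle.angle_eq_iff_two_pi_dvd_sub.1
    ((Complex.arg_neg_coe_angle hz).trans (Real.Angle.coe_add _ _).symm)
  have harg : arg (-z) = arg z + ((2 * k + 1 : ℤ) : ℝ) * π := by push_cast; linarith
  rw [harg, hv.int_mul]

theorem comp_arg_mul_of_sq_eq_one (hv : Periodic v π) {ε : ℝ} (hε : ε ^ 2 = 1) (z : ℂ) :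
    v (arg (ε * z)) = v (arg z) := by
  rcases sq_eq_one_iff.1 hε with rfl | rfl
  · simp
  · simpa using hv.comp_arg_neg z

end Function.Periodic

theorem Real.rpow_three_halves {x : ℝ} (hx : 0 ≤ x) : x ^ ((3 : ℝ) / 2) = √x ^ 3 := by
  rw [rpow_div_two_eq_sqrt _ hx]
  norm_cast

theorem hasDerivAt_div_sqrt_sq_add_sq_pow {u : ℝ → ℝ} {u' e t : ℝ} (n : ℕ)
    (hu : HasDerivAt u u' t) (ht : 0 < t ^ 2 + e ^ 2) :
    HasDerivAt (fun s => u s / √(s ^ 2 + e ^ 2) ^ n)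
      ((u' * (t ^ 2 + e ^ 2) - n * t * u t) / √(t ^ 2 + e ^ 2) ^ (n + 2)) t := by
  have hsq : HasDerivAt (fun s => s ^ 2 + e ^ 2) (2 * t) t := by
    simpa using (hasDerivAt_pow 2 t).add_const (e ^ 2)
  have hr : 0 < √(t ^ 2 + e ^ 2) := sqrt_pos.2 ht
  refine (hu.div ((hsq.sqrt ht.ne').fun_pow n) (by positivity)).congr_deriv ?_
  have hr2 : t ^ 2 + e ^ 2 = √(t ^ 2 + e ^ 2) ^ 2 := (sq_sqrt ht.le).symm
  set r := √(t ^ 2 + e ^ 2)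
  rw [hr2]
  rcases n with _ | n
  · simp [hr.ne']
  · simp only [Nat.add_sub_cancel]
    field_simp
    push_cast
    ring

theorem deriv_deriv_comp_div_sqrt_sq_add_sq_pow_three {g A : ℝ → ℝ} {c e t : ℝ}
    (hg : ContDiff ℝ 2 g) (hA : ∀ᶠ s in 𝓝 t, HasDerivAt A (c / (s ^ 2 + e ^ 2)) s)
    (ht : 0 < t ^ 2 + e ^ 2) :
    deriv (deriv fun s => g (A s) / √(s ^ 2 + e ^ 2) ^ 3) t =
      (c ^ 2 * deriv (deriv g) (A t) - 8 * c * t * deriv g (A t)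
        + (12 * t ^ 2 - 3 * e ^ 2) * g (A t)) / √(t ^ 2 + e ^ 2) ^ 7 := by
  have hg1 : Differentiable ℝ g := hg.differentiable (by norm_num)
  have hg2 : Differentiable ℝ (deriv g) :=
    (hg.iterate_deriv' 1 1).differentiable (by norm_num)
  have hpos : ∀ᶠ s in 𝓝 t, 0 < s ^ 2 + e ^ 2 :=
    (continuous_const.continuousAt).eventually_lt (by fun_prop) ht
  have hfirst : deriv (fun s => g (A s) / √(s ^ 2 + e ^ 2) ^ 3) =ᶠ[𝓝 t]
      fun s => (c * deriv g (A s) - 3 * s * g (A s)) / √(s ^ 2 + e ^ 2) ^ 5 := by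
    filter_upwards [hA, hpos] with s hAs hs
    have hu : HasDerivAt (fun s => g (A s)) (deriv g (A s) * (c / (s ^ 2 + e ^ 2))) s :=
      (hg1 _).hasDerivAt.comp s hAs
    rw [(hasDerivAt_div_sqrt_sq_add_sq_pow 3 hu hs).deriv]
    field_simp
    push_cast
    ring
  have hAt := hA.self_of_nhds
  have hnum : HasDerivAt (fun s => c * deriv g (A s) - 3 * s * g (A s))
      (c * (deriv (deriv g) (A t) * (c / (t ^ 2 + e ^ 2)))
        - (3 * g (A t) + 3 * t * (deriv g (A t) * (c / (t ^ 2 + e ^ 2))))) t := by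
    have h3 : HasDerivAt (fun s : ℝ => 3 * s) 3 t := by
      simpa using (hasDerivAt_id t).const_mul (3 : ℝ)
    exact (((hg2 _).hasDerivAt.comp t hAt).const_mul c).sub
      (h3.mul ((hg1 _).hasDerivAt.comp t hAt))
  rw [hfirst.deriv_eq, (hasDerivAt_div_sqrt_sq_add_sq_pow 5 hnum ht).deriv]
  field_simp
  ring

theorem hasDerivAt_arg_mul_ofReal_add_mul_I {ε b t : ℝ}
    (h : (ε : ℂ) * (t + b * I) ∈ slitPlane) :
    HasDerivAt (fun s : ℝ => arg (ε * (s + b * I))) (-b / (t ^ 2 + b ^ 2)) t := by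
  have hε : (ε : ℂ) ≠ 0 := left_ne_zero_of_mul (Complex.slitPlane_ne_zero h)
  have hline : HasDerivAt (fun s : ℝ => (ε : ℂ) * (s + b * I)) ε t := by
    simpa using ((hasDerivAt_id t).ofReal_comp.add_const (b * I)).const_mul (ε : ℂ)
  convert hline.carg_real h using 1
  rw [div_mul_cancel_left₀ hε, Complex.inv_im, Complex.normSq_add_mul_I]
  simp [neg_div]

theorem hasDerivAt_arg_mul_add_ofReal_mul_I {ε a t : ℝ}
    (h : (ε : ℂ) * (a + t * I) ∈ slitPlane) :
    HasDerivAt (fun s : ℝ => arg (ε * (a + s * I))) (a / (t ^ 2 + a ^ 2)) t := by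
  have hε : (ε : ℂ) ≠ 0 := left_ne_zero_of_mul (Complex.slitPlane_ne_zero h)
  have hline : HasDerivAt (fun s : ℝ => (ε : ℂ) * (a + s * I)) (ε * I) t := by
    simpa using
      (((hasDerivAt_id t).ofReal_comp.mul_const I).const_add (a : ℂ)).const_mul (ε : ℂ)
  convert hline.carg_real h using 1
  rw [mul_div_mul_left _ _ hε, Complex.div_im, Complex.normSq_add_mul_I]
  simp [add_comm]

section Pfun

variable {v : ℝ → ℝ}

theorem Pfun_eq_of_sq_eq_one (hv : Function.Periodic v π) {ε : ℝ} (hε : ε ^ 2 = 1)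
    (x : ℝ × ℝ) : Pfun v x = v (arg (ε * (x.1 + x.2 * I))) / √(x.1 ^ 2 + x.2 ^ 2) ^ 3 := by
  rw [Pfun, hv.comp_arg_mul_of_sq_eq_one hε, rpow_three_halves (by positivity)]

theorem contDiffAt_Pfun (hv : ContDiff ℝ 2 v) (hper : Function.Periodic v π) {x : ℝ × ℝ}
    (hx : x ≠ 0) : ContDiffAt ℝ 2 (Pfun v) x := by
  have hz := Complex.ofReal_add_mul_I_ne_zero hx
  obtain ⟨ε, hε, hslit⟩ := Complex.exists_sq_eq_one_mul_mem_slitPlane hz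
  have hρ := Complex.sq_add_sq_pos hz
  rw [show Pfun v = _ from funext (Pfun_eq_of_sq_eq_one hper hε)]
  refine ContDiffAt.div ?_ ((ContDiffAt.sqrt (f := fun p : ℝ × ℝ => p.1 ^ 2 + p.2 ^ 2) (n := 2)
    (by fun_prop) hρ.ne').pow 3) (by positivity)
  have hline : ContDiffAt ℝ 2 (fun p : ℝ × ℝ => (ε : ℂ) * (p.1 + p.2 * I)) x := by fun_prop
  exact hv.contDiffAt.comp x ((Complex.contDiffAt_arg hslit).comp (g := arg) x hline)

theorem laplacian_Pfun (hv : ContDiff ℝ 2 v) (hper : Function.Periodic v π) {ε a b : ℝ}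
    (hε : ε ^ 2 = 1) (hab : (ε : ℂ) * (a + b * I) ∈ slitPlane) :
    deriv (deriv fun t => Pfun v (t, b)) a + deriv (deriv fun t => Pfun v (a, t)) b =
      (deriv (deriv v) (arg (ε * (a + b * I))) + 9 * v (arg (ε * (a + b * I))))
        / √(a ^ 2 + b ^ 2) ^ 5 := by
  have hρ : 0 < a ^ 2 + b ^ 2 :=
    Complex.sq_add_sq_pos (right_ne_zero_of_mul (Complex.slitPlane_ne_zero hab))
  have hline : Continuous fun p : ℝ × ℝ => (ε : ℂ) * (p.1 + p.2 * I) := by fun_prop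
  have hopen : IsOpen {p : ℝ × ℝ | (ε : ℂ) * (p.1 + p.2 * I) ∈ slitPlane} :=
    Complex.isOpen_slitPlane.preimage hline
  have horiz : ∀ᶠ t in 𝓝 a, HasDerivAt (fun s : ℝ => arg (ε * (s + b * I)))
      (-b / (t ^ 2 + b ^ 2)) t := by
    filter_upwards [(hopen.preimage (Continuous.prodMk_left b)).mem_nhds hab] with t ht
    exact hasDerivAt_arg_mul_ofReal_add_mul_I ht
  have vert : ∀ᶠ t in 𝓝 b, HasDerivAt (fun s : ℝ => arg (ε * (a + s * I)))
      (a / (t ^ 2 + a ^ 2)) t := by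
    filter_upwards [(hopen.preimage (Continuous.prodMk_right a)).mem_nhds hab] with t ht
    exact hasDerivAt_arg_mul_add_ofReal_mul_I ht
  have hvert : (fun t => Pfun v (a, t)) =
      fun t : ℝ => v (arg (ε * (a + t * I))) / √(t ^ 2 + a ^ 2) ^ 3 := by
    ext t
    rw [Pfun_eq_of_sq_eq_one hper hε, add_comm (a ^ 2)]
  rw [funext fun t => Pfun_eq_of_sq_eq_one hper hε (t, b), hvert,
    deriv_deriv_comp_div_sqrt_sq_add_sq_pow_three hv horiz (by linarith),
    deriv_deriv_comp_div_sqrt_sq_add_sq_pow_three hv vert (by linarith), add_comm (b ^ 2)]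
  have hr2 : a ^ 2 + b ^ 2 = √(a ^ 2 + b ^ 2) ^ 2 := (sq_sqrt hρ.le).symm
  have hr : 0 < √(a ^ 2 + b ^ 2) := sqrt_pos.2 hρ
  set r := √(a ^ 2 + b ^ 2)
  field_simp
  set θ := arg (ε * (a + b * I))
  linear_combination (deriv (deriv v) θ + 9 * v θ) * hr2

theorem fker_arg_mul_div_sqrt_pow_five {β ε a b : ℝ} (hβ : 0 < β) (hε : ε ^ 2 = 1)
    (hab : (a : ℂ) + b * I ≠ 0) :
    fker β (arg (ε * (a + b * I))) / √(a ^ 2 + b ^ 2) ^ 5 =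
      (β * a ^ 2 + b ^ 2) ^ (-(5 : ℝ) / 2) := by
  have hρ : 0 < a ^ 2 + b ^ 2 := Complex.sq_add_sq_pos hab
  have hX : 0 ≤ β * a ^ 2 + b ^ 2 := by positivity
  have hε0 : (ε : ℂ) ≠ 0 := Complex.ofReal_ne_zero.2 (by rintro rfl; norm_num at hε)
  have hw : (ε : ℂ) * (a + b * I) ≠ 0 := mul_ne_zero hε0 hab
  have hnorm : ‖(ε : ℂ) * (a + b * I)‖ = √(a ^ 2 + b ^ 2) := by
    rw [norm_mul, Complex.norm_add_mul_I, Complex.norm_real, norm_eq_abs,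
      ← sqrt_sq_eq_abs, hε, sqrt_one, one_mul]
  have hbase : β * cos (arg (ε * (a + b * I))) ^ 2 + sin (arg (ε * (a + b * I))) ^ 2 =
      (β * a ^ 2 + b ^ 2) / (a ^ 2 + b ^ 2) := by
    rw [Complex.cos_arg hw, Complex.sin_arg, hnorm]
    simp only [Complex.mul_re, Complex.mul_im, Complex.add_re, Complex.add_im, Complex.ofReal_re,
      Complex.ofReal_im, Complex.I_re, Complex.I_im]
    rw [div_pow, div_pow, sq_sqrt hρ.le]
    field_simp
    linear_combination (β * a ^ 2 + b ^ 2) * hε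
  have hs : 0 < √(a ^ 2 + b ^ 2) ^ 5 := by positivity
  rw [fker, hbase, div_rpow hX hρ.le, rpow_div_two_eq_sqrt _ hρ.le, rpow_neg (sqrt_nonneg _),
    div_inv_eq_mul, mul_div_assoc, show √(a ^ 2 + b ^ 2) ^ (5 : ℝ) = √(a ^ 2 + b ^ 2) ^ 5 by
      norm_cast, div_self hs.ne', mul_one]

/-- `P` is C² away from the origin and `ΔP(x) = (β x₁² + x₂²)^{-5/2}`. -/
theorem stmt7 (β : ℝ) (hβ : β ∈ Set.Icc (1/2 : ℝ) 2) (v : ℝ → ℝ) (hv : IsVBeta β v) :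
    ContDiffOn ℝ 2 (Pfun v) {(0 : ℝ × ℝ)}ᶜ ∧
    ∀ x : ℝ × ℝ, x ≠ 0 →
      deriv (deriv (fun t : ℝ => Pfun v (t, x.2))) x.1
        + deriv (deriv (fun t : ℝ => Pfun v (x.1, t))) x.2
        = (β * x.1^2 + x.2^2) ^ (-(5:ℝ)/2) := by
  obtain ⟨hv2, hper, hode⟩ := hv
  refine ⟨fun x hx => (contDiffAt_Pfun hv2 hper hx).contDiffWithinAt, fun x hx => ?_⟩
  have hz := Complex.ofReal_add_mul_I_ne_zero hx
  obtain ⟨ε, hε, hslit⟩ := Complex.exists_sq_eq_one_mul_mem_slitPlane hz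
  rw [laplacian_Pfun hv2 hper hε hslit, hode,
    fker_arg_mul_div_sqrt_pow_five (by linarith [hβ.1]) hε hz]
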